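/- Let d ≥ 2 and let γ_d be the standard Gaussian measure on ℝ^d. Define the remainder kernel r(x,y) = (1/(2π))·Σ_{n=1}^∞ C(2n,n)·⟨x,y⟩^{2n+2}/(2^{2n}(2n+1)(2n+2)(|x||y|)^{2n+1}) for nonzero x,y. Then ∫ r(x,x) dγ_d(x) ≤ (d/2)·( 1/2 − (3d+2)/(2π(d+2)) ), and in particular ∫ r(x,x) dγ_d(x) ≤ 0.026·(d/2) for all sufficiently large d. -/

import Mathlib

open MeasureTheory Real
open scoped NNReal ENNReal

/-- The standard Gaussian measure on `ℝ^d`. -/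
noncomputable def stdGaussian (d : ℕ) : Measure (Fin d → ℝ) :=
  Measure.pi fun _ => ProbabilityTheory.gaussianReal 0 1

/-- ReLU activation. -/
def relu (t : ℝ) : ℝ := max t 0

/-- Euclidean inner product on `ℝ^d`. -/
noncomputable def dot {d : ℕ} (x y : Fin d → ℝ) : ℝ := ∑ i, x i * y i

/-- Euclidean norm on `ℝ^d`. -/
noncomputable def vnorm {d : ℕ} (x : Fin d → ℝ) : ℝ := Real.sqrt (∑ i, x i ^ 2)

/-- The neural tangent kernel `k(x,y) = E_Z[relu(⟨x,Z⟩) relu(⟨y,Z⟩)]`. -/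
noncomputable def ntk (d : ℕ) (x y : Fin d → ℝ) : ℝ :=
  ∫ z, relu (dot x z) * relu (dot y z) ∂ stdGaussian d

/-- The `n`-th term of the series part of the NTK expansion. -/
noncomputable def ntkTerm {d : ℕ} (x y : Fin d → ℝ) (n : ℕ) : ℝ :=
  (Nat.choose (2 * n) n : ℝ) * dot x y ^ (2 * n + 2) /
    (2 ^ (2 * n) * (2 * n + 1) * (2 * n + 2) * (vnorm x * vnorm y) ^ (2 * n + 1))

/-- Remainder kernel `r(x,y)`. -/
noncomputable def rker {d : ℕ} (x y : Fin d → ℝ) : ℝ :=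
  (1 / (2 * π)) * ∑' n : ℕ, ntkTerm x y (n + 1)

/-! ### The sequence `c n = C(2n,n)/4^n` and its convolution identity -/

open Finset in
noncomputable def cseq (n : ℕ) : ℝ := (Nat.choose (2*n) n : ℝ) / 4^n

noncomputable def aseq (n : ℕ) : ℝ := cseq n / ((2*(n:ℝ)+1)*(2*(n:ℝ)+2))

lemma cseq_nonneg (n : ℕ) : 0 ≤ cseq n :=
  div_nonneg (Nat.cast_nonneg _) (by positivity)

lemma cseq_zero : cseq 0 = 1 := by simp [cseq]

lemma cseq_succ (n : ℕ) : cseq (n+1) * (2*(n:ℝ)+2) = cseq n * (2*(n:ℝ)+1) := by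
  have h := Nat.succ_mul_centralBinom_succ n
  simp only [Nat.centralBinom] at h
  have h' : ((n:ℝ)+1) * (Nat.choose (2*(n+1)) (n+1) : ℝ) = 2 * (2*n+1) * (Nat.choose (2*n) n : ℝ) := by
    exact_mod_cast congrArg (Nat.cast : ℕ → ℝ) h
  simp only [cseq]
  rw [pow_succ]
  rw [div_mul_eq_mul_div, div_mul_eq_mul_div, div_eq_div_iff (by positivity) (by positivity)]
  linear_combination (2 * (4:ℝ)^n) * h'

open Finset

noncomputable def Ec (n : ℕ) : ℝ := ∑ k ∈ range (n+1), cseq k * cseq (n-k)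
noncomputable def Tc (n : ℕ) : ℝ := ∑ k ∈ range (n+1), (2*(k:ℝ)+1) * (cseq k * cseq (n-k))

lemma hA (n : ℕ) : Tc n + Tc n = (2*(n:ℝ)+2) * Ec n := by
  have hrefl := Finset.sum_range_reflect
    (fun k => (2*(k:ℝ)+1) * (cseq k * cseq (n-k))) (n+1)
  have h2 : Tc n = ∑ k ∈ range (n+1), (2*((n:ℝ)-(k:ℝ))+1) * (cseq (n-k) * cseq k) := by
    rw [Tc, ← hrefl]
    apply Finset.sum_congr rfl
    intro k hk
    have hk' : k ≤ n := Nat.lt_succ_iff.mp (mem_range.mp hk)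
    have e1 : n + 1 - 1 - k = n - k := by omega
    rw [e1, Nat.sub_sub_self hk', Nat.cast_sub hk']
  have h1 : Tc n = ∑ k ∈ range (n+1), (2*(k:ℝ)+1) * (cseq k * cseq (n-k)) := rfl
  nth_rewrite 2 [h2]
  nth_rewrite 1 [h1]
  rw [← Finset.sum_add_distrib, Ec, Finset.mul_sum]
  apply Finset.sum_congr rfl
  intro k _
  ring

lemma hB (n : ℕ) : Tc n + Tc n = (2*(n:ℝ)+2) * Ec (n+1) := by
  have hTW : Tc n = ∑ m ∈ range (n+2), (2*(m:ℝ)) * (cseq m * cseq (n+1-m)) := by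
    rw [Finset.sum_range_succ' (fun m => (2*(m:ℝ)) * (cseq m * cseq (n+1-m))) (n+1)]
    simp only [Nat.cast_zero, mul_zero, zero_mul, add_zero, Nat.cast_add, Nat.cast_one]
    rw [Tc]
    apply Finset.sum_congr rfl
    intro k _
    have e1 : n + 1 - (k + 1) = n - k := by omega
    rw [e1]
    have := cseq_succ k
    calc (2*(k:ℝ)+1) * (cseq k * cseq (n-k))
        = (cseq k * (2*(k:ℝ)+1)) * cseq (n-k) := by ring
      _ = (cseq (k+1) * (2*(k:ℝ)+2)) * cseq (n-k) := by rw [← this]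
      _ = 2*((k:ℝ)+1) * (cseq (k+1) * cseq (n-k)) := by ring
  have hrefl := Finset.sum_range_reflect
    (fun m => (2*(m:ℝ)) * (cseq m * cseq (n+1-m))) (n+2)
  have h2 : Tc n = ∑ m ∈ range (n+2), (2*(((n:ℝ)+1)-(m:ℝ))) * (cseq (n+1-m) * cseq m) := by
    rw [hTW, ← hrefl]
    apply Finset.sum_congr rfl
    intro k hk
    have hk' : k ≤ n+1 := Nat.lt_succ_iff.mp (mem_range.mp hk)
    have e1 : n + 2 - 1 - k = n + 1 - k := by omega
    rw [e1, Nat.sub_sub_self hk']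
    have : ((n + 1 - k : ℕ) : ℝ) = (n:ℝ) + 1 - (k:ℝ) := by
      push_cast [Nat.cast_sub hk']
      ring
    rw [this]
  nth_rewrite 2 [h2]
  nth_rewrite 1 [hTW]
  rw [← Finset.sum_add_distrib, Ec, Finset.mul_sum]
  apply Finset.sum_congr rfl
  intro k _
  ring

lemma Ec_eq_one (n : ℕ) : Ec n = 1 := by
  induction n with
  | zero => simp [Ec, cseq_zero]
  | succ n ih =>
    have h := (hA n).symm.trans (hB n)
    have hpos : (2*(n:ℝ)+2) ≠ 0 := by positivity
    have := mul_left_cancel₀ hpos h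
    rw [← this, ih]

/-! ### Partial sums of the binomial series are bounded by `1/√(1-y)` -/

lemma psum_sq_le {N : ℕ} {y : ℝ} (hy0 : 0 ≤ y) (hy1 : y < 1) :
    (1-y) * (∑ n ∈ range N, cseq n * y^n)^2 ≤ 1 := by
  have key : (∑ n ∈ range N, cseq n * y^n)^2 ≤ ∑ m ∈ range (2*N), y^m := by
    rw [sq, Finset.sum_mul_sum, ← Finset.sum_product']
    have hsub : (range N) ×ˢ (range N) ⊆
        (range (2*N)).biUnion (fun m => Finset.HasAntidiagonal.antidiagonal m) := by
      intro p hp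
      rw [Finset.mem_product, mem_range, mem_range] at hp
      rw [Finset.mem_biUnion]
      exact ⟨p.1 + p.2, mem_range.mpr (by omega), Finset.HasAntidiagonal.mem_antidiagonal.mpr rfl⟩
    have hdisj : Set.PairwiseDisjoint ↑(range (2*N)) (fun m => Finset.HasAntidiagonal.antidiagonal (m:ℕ)) := by
      intro i _ j _ hij
      apply Finset.disjoint_left.2
      intro p hpi hpj
      exact hij ((Finset.HasAntidiagonal.mem_antidiagonal.mp hpi).symm.trans (Finset.HasAntidiagonal.mem_antidiagonal.mp hpj))
    calc ∑ p ∈ (range N) ×ˢ (range N), (cseq p.1 * y^p.1) * (cseq p.2 * y^p.2)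
        ≤ ∑ p ∈ (range (2*N)).biUnion (fun m => Finset.HasAntidiagonal.antidiagonal m),
            (cseq p.1 * y^p.1) * (cseq p.2 * y^p.2) := by
          apply Finset.sum_le_sum_of_subset_of_nonneg hsub
          intro p _ _
          have := cseq_nonneg p.1; have := cseq_nonneg p.2
          positivity
      _ = ∑ m ∈ range (2*N), ∑ p ∈ Finset.HasAntidiagonal.antidiagonal m,
            (cseq p.1 * y^p.1) * (cseq p.2 * y^p.2) := Finset.sum_biUnion hdisj
      _ = ∑ m ∈ range (2*N), y^m := by
          apply Finset.sum_congr rfl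
          intro m _
          rw [Finset.Nat.sum_antidiagonal_eq_sum_range_succ_mk]
          have : ∀ k ∈ range (m+1), (cseq k * y^k) * (cseq (m-k) * y^(m-k))
              = (cseq k * cseq (m-k)) * y^m := by
            intro k hk
            have hk' : k ≤ m := Nat.lt_succ_iff.mp (mem_range.mp hk)
            have : y^k * y^(m-k) = y^m := by
              rw [← pow_add]; congr 1; omega
            calc (cseq k * y^k) * (cseq (m-k) * y^(m-k))
                = (cseq k * cseq (m-k)) * (y^k * y^(m-k)) := by ring
              _ = (cseq k * cseq (m-k)) * y^m := by rw [this]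
          rw [Finset.sum_congr rfl this, ← Finset.sum_mul]
          have := Ec_eq_one m
          rw [Ec] at this
          rw [this, one_mul]
  have hgeom : (1-y) * ∑ m ∈ range (2*N), y^m = 1 - y^(2*N) := by
    have := geom_sum_eq (hy1.ne) (2*N)
    rw [this]
    have hne : y - 1 ≠ 0 := by intro h; apply hy1.ne; linarith
    field_simp
    ring
  have h1 : (1-y) * (∑ n ∈ range N, cseq n * y^n)^2 ≤ (1-y) * ∑ m ∈ range (2*N), y^m :=
    mul_le_mul_of_nonneg_left key (by linarith)
  have h2 : (1:ℝ) - y^(2*N) ≤ 1 := by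
    have : 0 ≤ y^(2*N) := by positivity
    linarith
  linarith [hgeom ▸ h1]

lemma psum_le {N : ℕ} {y : ℝ} (hy0 : 0 ≤ y) (hy1 : y < 1) :
    (∑ n ∈ range N, cseq n * y^n) ≤ 1 / Real.sqrt (1-y) := by
  have hP : 0 ≤ ∑ n ∈ range N, cseq n * y^n := by
    apply Finset.sum_nonneg
    intro n _
    have := cseq_nonneg n
    positivity
  have h1y : (0:ℝ) < 1 - y := by linarith
  have hsq : (∑ n ∈ range N, cseq n * y^n)^2 ≤ 1/(1-y) := by
    rw [le_div_iff₀ h1y, mul_comm]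
    exact psum_sq_le hy0 hy1
  calc (∑ n ∈ range N, cseq n * y^n) = Real.sqrt ((∑ n ∈ range N, cseq n * y^n)^2) :=
        (Real.sqrt_sq hP).symm
    _ ≤ Real.sqrt (1/(1-y)) := Real.sqrt_le_sqrt hsq
    _ = 1 / Real.sqrt (1-y) := by
        rw [one_div, one_div, Real.sqrt_inv]

/-! ### `∑ aseq n ≤ π/2 - 1` via the integral `∫₀¹ (1-t)/√(1-t²) dt` -/

lemma int_pw (n : ℕ) : ∫ t in (0:ℝ)..1, ((1-t) * t^(2*n))
    = 1/((2*(n:ℝ)+1)*(2*(n:ℝ)+2)) := by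
  have h : ∀ t : ℝ, (1-t) * t^(2*n) = t^(2*n) - t^(2*n+1) := by intro t; ring
  simp_rw [h]
  rw [intervalIntegral.integral_sub (intervalIntegral.intervalIntegrable_pow _)
    (intervalIntegral.intervalIntegrable_pow _), integral_pow, integral_pow]
  push_cast
  have h1 : (2*(n:ℝ)+1) ≠ 0 := by positivity
  have h2 : (2*(n:ℝ)+2) ≠ 0 := by positivity
  norm_num
  have h3 : (2*(n:ℝ)+1+1) ≠ 0 := by positivity
  field_simp
  ring

noncomputable def gfun (t : ℝ) : ℝ := Real.sqrt ((1-t)/(1+t))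

lemma gfun_eq {t : ℝ} (ht0 : 0 ≤ t) (ht1 : t < 1) :
    gfun t = (1-t) * (1 / Real.sqrt (1 - t^2)) := by
  have h1t : (0:ℝ) < 1 - t := by linarith
  have h1t' : (0:ℝ) < 1 + t := by linarith
  rw [gfun, show (1:ℝ) - t^2 = (1-t)*(1+t) by ring, Real.sqrt_mul h1t.le,
    Real.sqrt_div h1t.le]
  have ha : 0 < Real.sqrt (1-t) := Real.sqrt_pos.mpr h1t
  have hb : 0 < Real.sqrt (1+t) := Real.sqrt_pos.mpr h1t'
  rw [div_eq_iff hb.ne']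
  field_simp
  nlinarith [Real.mul_self_sqrt h1t.le]

lemma gfun_int : IntervalIntegrable gfun MeasureTheory.volume 0 1 := by
  apply ContinuousOn.intervalIntegrable
  rw [Set.uIcc_of_le (by norm_num : (0:ℝ) ≤ 1)]
  apply ContinuousOn.sqrt
  apply ContinuousOn.div (by fun_prop) (by fun_prop)
  intro t ht
  have := ht.1
  intro h; simp at ht; linarith

lemma gfun_integral : ∫ t in (0:ℝ)..1, gfun t = π/2 - 1 := by
  have hG : ∀ t ∈ Set.Ioo (0:ℝ) 1, HasDerivAt (fun t => Real.arcsin t + Real.sqrt (1 - t^2))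
      (gfun t) t := by
    intro t ht
    obtain ⟨ht0, ht1⟩ := ht
    have hne : (1:ℝ) - t^2 ≠ 0 := by nlinarith
    have h1 : HasDerivAt Real.arcsin (1/Real.sqrt (1-t^2)) t :=
      Real.hasDerivAt_arcsin (by linarith) (by linarith)
    have h2 : HasDerivAt (fun t : ℝ => 1 - t^2) (-(2*t)) t := by
      simpa using ((hasDerivAt_pow 2 t).const_sub 1)
    have h3 := (Real.hasDerivAt_sqrt hne).comp t h2
    have h4 := h1.add h3
    have hsq : Real.sqrt (1-t^2) > 0 := Real.sqrt_pos.mpr (by nlinarith)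
    refine h4.congr_deriv ?_
    rw [gfun_eq ht0.le ht1]
    field_simp
    ring
  rw [intervalIntegral.integral_eq_sub_of_hasDeriv_right_of_le (by norm_num)
    ((Real.continuous_arcsin.add (by fun_prop)).continuousOn)
    (fun t ht => (hG t ht).hasDerivWithinAt) gfun_int]
  norm_num [Real.arcsin_one]

lemma key_partial (N : ℕ) : ∑ n ∈ range N, aseq n ≤ π/2 - 1 := by
  have hsum : ∑ n ∈ range N, aseq n
      = ∫ t in (0:ℝ)..1, ∑ n ∈ range N, cseq n * ((1-t) * t^(2*n)) := by
    rw [intervalIntegral.integral_finset_sum]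
    · apply Finset.sum_congr rfl
      intro n _
      rw [intervalIntegral.integral_const_mul, int_pw, aseq, div_eq_mul_one_div]
    · intro n _
      apply Continuous.intervalIntegrable
      fun_prop
  rw [hsum, ← gfun_integral]
  apply intervalIntegral.integral_mono_on (by norm_num) _ gfun_int
  · intro t ht
    obtain ⟨ht0, ht1⟩ := ht
    rcases eq_or_lt_of_le ht1 with h1 | h1
    · have : ∀ n ∈ range N, cseq n * ((1-t) * t^(2*n)) = 0 := by
        intro n _; rw [← h1]; ring
      rw [Finset.sum_congr rfl this, Finset.sum_const, smul_zero]
      exact Real.sqrt_nonneg _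
    · have hy1 : t^2 < 1 := by nlinarith
      have hy0 : 0 ≤ t^2 := sq_nonneg t
      have hP := psum_le (N := N) hy0 hy1
      calc ∑ n ∈ range N, cseq n * ((1-t) * t^(2*n))
          = (1-t) * ∑ n ∈ range N, cseq n * (t^2)^n := by
            rw [Finset.mul_sum]
            apply Finset.sum_congr rfl
            intro n _
            rw [← pow_mul]
            ring
        _ ≤ (1-t) * (1 / Real.sqrt (1 - t^2)) := by
            apply mul_le_mul_of_nonneg_left hP (by linarith)
        _ = gfun t := (gfun_eq ht0 h1).symm
  · apply Continuous.intervalIntegrable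
    fun_prop

lemma aseq_nonneg (n : ℕ) : 0 ≤ aseq n := by
  rw [aseq]
  have := cseq_nonneg n
  positivity

lemma aseq_zero : aseq 0 = 1/2 := by
  rw [aseq, cseq_zero]
  norm_num

lemma tail_bound : ∑' n : ℕ, aseq (n+1) ≤ π/2 - 3/2 := by
  apply Real.tsum_le_of_sum_range_le (fun n => aseq_nonneg (n+1))
  intro N
  have h := key_partial (N+1)
  rw [Finset.sum_range_succ' (fun n => aseq n) N, aseq_zero] at h
  linarith

lemma tail_nonneg : 0 ≤ ∑' n : ℕ, aseq (n+1) :=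
  tsum_nonneg (fun n => aseq_nonneg (n+1))

/-! ### Gaussian second moment -/

lemma integrable_sq_exp : Integrable (fun x : ℝ => x * (x * rexp (-(2⁻¹) * x^2))) := by
  have hb : (0:ℝ) < 2⁻¹ := by norm_num
  have this := integrable_rpow_mul_exp_neg_mul_sq hb (by norm_num : (-1:ℝ) < 2)
  have h2 : (fun x : ℝ => x ^ (2:ℝ) * rexp (-(2⁻¹) * x^2))
      = (fun x : ℝ => x * (x * rexp (-(2⁻¹) * x^2))) := by
    funext x
    rw [show (2:ℝ) = ((2:ℕ):ℝ) by norm_num, Real.rpow_natCast]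
    ring
  exact h2 ▸ this

lemma integral_sq_exp : ∫ x : ℝ, x^2 * rexp (-(2⁻¹) * x^2) = Real.sqrt (2*π) := by
  have hb : (0:ℝ) < 2⁻¹ := by norm_num
  have hu : ∀ x : ℝ, HasDerivAt (fun x : ℝ => x) 1 x := fun x => hasDerivAt_id x
  have hv : ∀ x : ℝ, HasDerivAt (fun x : ℝ => -rexp (-(2⁻¹) * x^2))
      (x * rexp (-(2⁻¹) * x^2)) x := by
    intro x
    have h1 : HasDerivAt (fun x : ℝ => -(2⁻¹) * x^2) (-(2⁻¹) * (2*x)) x := by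
      simpa using ((hasDerivAt_pow 2 x).const_mul (-(2⁻¹:ℝ)))
    have h2 := (h1.exp).neg
    refine h2.congr_deriv ?_
    ring
  have huv' : Integrable ((fun x : ℝ => x) * fun x => x * rexp (-(2⁻¹) * x^2)) :=
    integrable_sq_exp
  have hu'v : Integrable ((fun _ : ℝ => (1:ℝ)) * fun x => -rexp (-(2⁻¹) * x^2)) := by
    have := (integrable_exp_neg_mul_sq hb).neg
    apply this.congr
    filter_upwards with x
    simp [Pi.mul_apply]
  have huv : Integrable ((fun x : ℝ => x) * fun x => -rexp (-(2⁻¹) * x^2)) := by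
    have := (integrable_mul_exp_neg_mul_sq hb).neg
    apply this.congr
    filter_upwards with x
    simp [Pi.mul_apply]
  have key := integral_mul_deriv_eq_deriv_mul_of_integrable (fun x _ => hu x) (fun x _ => hv x) huv' hu'v huv
  have hg : ∫ x : ℝ, rexp (-(2⁻¹) * x^2) = Real.sqrt (2*π) := by
    rw [integral_gaussian]
    congr 1
    rw [div_inv_eq_mul]
    ring
  calc ∫ x : ℝ, x^2 * rexp (-(2⁻¹) * x^2)
      = ∫ x : ℝ, x * (x * rexp (-(2⁻¹) * x^2)) := by
        congr 1; funext x; ring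
    _ = - ∫ x : ℝ, 1 * (-rexp (-(2⁻¹) * x^2)) := key
    _ = ∫ x : ℝ, rexp (-(2⁻¹) * x^2) := by
        rw [← integral_neg]; congr 1; funext x; ring
    _ = Real.sqrt (2*π) := hg

open ProbabilityTheory

lemma gaussianPDFReal_eq (x : ℝ) :
    gaussianPDFReal 0 1 x = (Real.sqrt (2*π))⁻¹ * rexp (-(2⁻¹) * x^2) := by
  unfold gaussianPDFReal
  norm_num
  left
  ring_nf

lemma integral_sq_gaussianReal : ∫ x, x^2 ∂(gaussianReal 0 1) = 1 := by
  rw [gaussianReal_of_var_ne_zero 0 one_ne_zero]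
  have hmeas : Measurable (fun x => Real.toNNReal (gaussianPDFReal 0 1 x)) :=
    (measurable_gaussianPDFReal 0 1).real_toNNReal
  have hd : gaussianPDF 0 1 = fun x => ((Real.toNNReal (gaussianPDFReal 0 1 x) : ℝ≥0) : ℝ≥0∞) :=
    rfl
  rw [hd, integral_withDensity_eq_integral_smul hmeas]
  have : ∀ x : ℝ, (Real.toNNReal (gaussianPDFReal 0 1 x)) • x^2
      = (Real.sqrt (2*π))⁻¹ * (x^2 * rexp (-(2⁻¹) * x^2)) := by
    intro x
    rw [NNReal.smul_def, Real.coe_toNNReal _ (gaussianPDFReal_nonneg 0 1 x),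
      gaussianPDFReal_eq, smul_eq_mul]
    ring
  rw [show (fun x : ℝ => (Real.toNNReal (gaussianPDFReal 0 1 x)) • x^2)
    = fun x : ℝ => (Real.sqrt (2*π))⁻¹ * (x^2 * rexp (-(2⁻¹) * x^2)) from funext this]
  rw [MeasureTheory.integral_const_mul, integral_sq_exp]
  have h2π : (0:ℝ) < Real.sqrt (2*π) := Real.sqrt_pos.mpr (by positivity)
  field_simp

lemma integrable_sq_gaussianReal : Integrable (fun x : ℝ => x^2) (gaussianReal 0 1) := by
  rw [gaussianReal_of_var_ne_zero 0 one_ne_zero]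
  have hmeas : Measurable (fun x => Real.toNNReal (gaussianPDFReal 0 1 x)) :=
    (measurable_gaussianPDFReal 0 1).real_toNNReal
  have hd : gaussianPDF 0 1 = fun x => ((Real.toNNReal (gaussianPDFReal 0 1 x) : ℝ≥0) : ℝ≥0∞) :=
    rfl
  rw [hd, integrable_withDensity_iff_integrable_smul hmeas]
  have : (fun x : ℝ => (Real.toNNReal (gaussianPDFReal 0 1 x)) • x^2)
      = fun x : ℝ => (Real.sqrt (2*π))⁻¹ * (x * (x * rexp (-(2⁻¹) * x^2))) := by
    funext x
    rw [NNReal.smul_def, Real.coe_toNNReal _ (gaussianPDFReal_nonneg 0 1 x),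
      gaussianPDFReal_eq, smul_eq_mul]
    ring
  rw [this]
  exact integrable_sq_exp.const_mul _

lemma stdGaussian_map_eval (d : ℕ) (i : Fin d) :
    (stdGaussian d).map (fun x => x i) = gaussianReal 0 1 := by
  apply Measure.ext
  intro s hs
  rw [Measure.map_apply (measurable_pi_apply i) hs]
  have hpre : (fun x : Fin d → ℝ => x i) ⁻¹' s
      = Set.pi Set.univ (Function.update (fun _ => Set.univ) i s) := Set.eval_preimage
  rw [hpre, _root_.stdGaussian, Measure.pi_pi]
  rw [Finset.prod_eq_single i]
  · simp
  · intro j _ hj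
    simp [Function.update_of_ne hj]
  · intro h
    exact absurd (Finset.mem_univ i) h

lemma integrable_eval_sq (d : ℕ) (i : Fin d) :
    Integrable (fun x : Fin d → ℝ => (x i)^2) (stdGaussian d) := by
  have hmap := stdGaussian_map_eval d i
  have h := integrable_map_measure (μ := stdGaussian d) (f := fun x : Fin d → ℝ => x i)
      (g := fun t : ℝ => t^2)
      (by rw [hmap]; exact (measurable_id.pow_const 2).aestronglyMeasurable)
      (measurable_pi_apply i).aemeasurable
  exact h.mp (by rw [hmap]; exact integrable_sq_gaussianReal)

lemma integral_eval_sq (d : ℕ) (i : Fin d) :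
    ∫ x : Fin d → ℝ, (x i)^2 ∂ stdGaussian d = 1 := by
  have hmap := stdGaussian_map_eval d i
  have := integral_map (μ := stdGaussian d) (φ := fun x : Fin d → ℝ => x i)
    (f := fun t : ℝ => t^2) (measurable_pi_apply i).aemeasurable
    (by rw [hmap]; exact (measurable_id.pow_const 2).aestronglyMeasurable)
  rw [← this, hmap, integral_sq_gaussianReal]

lemma integral_normsq (d : ℕ) :
    ∫ x : Fin d → ℝ, (∑ i, (x i)^2) ∂ stdGaussian d = d := by
  rw [integral_finset_sum Finset.univ (fun i _ => integrable_eval_sq d i)]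
  simp [integral_eval_sq]

/-! ### The diagonal of the remainder kernel -/

lemma dot_self_eq {d : ℕ} (x : Fin d → ℝ) : dot x x = vnorm x ^ 2 := by
  rw [vnorm, Real.sq_sqrt (Finset.sum_nonneg fun i _ => sq_nonneg (x i)), dot]
  apply Finset.sum_congr rfl
  intro i _
  ring

lemma vnorm_nonneg' {d : ℕ} (x : Fin d → ℝ) : 0 ≤ vnorm x := Real.sqrt_nonneg _

lemma ntkTerm_self {d : ℕ} (x : Fin d → ℝ) (n : ℕ) :
    ntkTerm x x n = aseq n * vnorm x ^ 2 := by
  rw [ntkTerm, dot_self_eq]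
  rcases eq_or_lt_of_le (vnorm_nonneg' x) with h0 | h0
  · rw [← h0]
    simp [aseq]
  · have hv : vnorm x ≠ 0 := h0.ne'
    have h1 : (2:ℝ)^(2*n) * (2*(n:ℝ)+1) * (2*(n:ℝ)+2) * (vnorm x * vnorm x)^(2*n+1) ≠ 0 := by
      positivity
    rw [aseq, cseq]
    have h4 : (4:ℝ)^n = 2^(2*n) := by rw [pow_mul]; norm_num
    field_simp
    rw [show (vnorm x ^2)^(2*n+2) = (vnorm x * vnorm x)^(2*n+1) * vnorm x ^2 by ring]
    rw [mul_comm 2 n] at h4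
    rw [h4]
    ring

lemma rker_self {d : ℕ} (x : Fin d → ℝ) :
    rker x x = ((1 / (2 * π)) * ∑' n : ℕ, aseq (n+1)) * vnorm x ^ 2 := by
  rw [rker]
  have : ∀ n : ℕ, ntkTerm x x (n+1) = aseq (n+1) * vnorm x ^ 2 := fun n => ntkTerm_self x (n+1)
  rw [tsum_congr this, tsum_mul_right]
  ring

lemma integral_rker (d : ℕ) :
    ∫ x : Fin d → ℝ, rker x x ∂ stdGaussian d
      = ((1 / (2 * π)) * ∑' n : ℕ, aseq (n+1)) * d := by
  have hpt : ∀ x : Fin d → ℝ, rker x x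
      = ((1 / (2 * π)) * ∑' n : ℕ, aseq (n+1)) * (∑ i, (x i)^2) := by
    intro x
    rw [rker_self, vnorm, Real.sq_sqrt (Finset.sum_nonneg fun i _ => sq_nonneg (x i))]
  calc ∫ x : Fin d → ℝ, rker x x ∂ stdGaussian d
      = ∫ x : Fin d → ℝ, ((1 / (2 * π)) * ∑' n : ℕ, aseq (n+1)) * (∑ i, (x i)^2)
          ∂ stdGaussian d := by
        exact integral_congr_ae (Filter.Eventually.of_forall hpt)
    _ = ((1 / (2 * π)) * ∑' n : ℕ, aseq (n+1)) * ∫ x : Fin d → ℝ, (∑ i, (x i)^2)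
          ∂ stdGaussian d := MeasureTheory.integral_const_mul _ _
    _ = ((1 / (2 * π)) * ∑' n : ℕ, aseq (n+1)) * d := by rw [integral_normsq]

theorem rker_trace_bound :
    (∀ d : ℕ, 2 ≤ d →
      ∫ x : Fin d → ℝ, rker x x ∂ stdGaussian d
        ≤ ((d : ℝ) / 2) * (1 / 2 - (3 * d + 2) / (2 * π * (d + 2)))) ∧
    ∃ N : ℕ, ∀ d : ℕ, N ≤ d →
      ∫ x : Fin d → ℝ, rker x x ∂ stdGaussian d ≤ 0.026 * ((d : ℝ) / 2) := by
  set L : ℝ := ∑' n : ℕ, aseq (n+1) with hLdef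
  have hL : L ≤ π/2 - 3/2 := tail_bound
  have hL0 : 0 ≤ L := tail_nonneg
  have hπ : (0:ℝ) < π := Real.pi_pos
  constructor
  · intro d hd
    rw [integral_rker]
    have hd0 : (0:ℝ) ≤ (d:ℝ) := Nat.cast_nonneg d
    have hd2 : (0:ℝ) < (d:ℝ) + 2 := by linarith
    have hq3 : (3*(d:ℝ)+2)/((d:ℝ)+2) ≤ 3 := by
      rw [div_le_iff₀ hd2]; linarith
    have hq0 : 0 ≤ (3*(d:ℝ)+2)/((d:ℝ)+2) := by positivity
    have expand : ((d:ℝ)/2) * (1/2 - (3*(d:ℝ)+2)/(2*π*((d:ℝ)+2))) - (1/(2*π)) * L * d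
        = ((d:ℝ) * ((π - (3*(d:ℝ)+2)/((d:ℝ)+2)) - 2*L)) / (4*π) := by
      field_simp
      ring
    have hnum : 0 ≤ (d:ℝ) * ((π - (3*(d:ℝ)+2)/((d:ℝ)+2)) - 2*L) := by
      apply mul_nonneg hd0
      have : 2*L ≤ π - 3 := by linarith
      linarith
    have : 0 ≤ ((d:ℝ)/2) * (1/2 - (3*(d:ℝ)+2)/(2*π*((d:ℝ)+2))) - (1/(2*π)) * L * d := by
      rw [expand]
      positivity
    linarith
  · refine ⟨0, fun d _ => ?_⟩
    rw [integral_rker]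
    have hd0 : (0:ℝ) ≤ (d:ℝ) := Nat.cast_nonneg d
    have hπ315 : π < 3.15 := by
      have := Real.pi_lt_d6
      linarith
    have hc : (1/(2*π)) * L ≤ 0.013 := by
      rw [one_div, inv_mul_le_iff₀ (by positivity)]
      nlinarith
    calc (1/(2*π)) * L * (d:ℝ) ≤ 0.013 * (d:ℝ) :=
          mul_le_mul_of_nonneg_right hc hd0
      _ = 0.026 * ((d:ℝ)/2) := by ring
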